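/- arXiv:1801.06886 — 4 statements merged into one kernel-verified Lean document; each statement's English description precedes it below -/
import Mathlib

section
/- Sequential conjunction on the four-element set is associative: for all A, B, C ∈ {0, 1/4, 1/2, 1}, (A ▷₄ B) ▷₄ C = A ▷₄ (B ▷₄ C). -/
/-- The four-element set 𝟜 = {0, 1/4, 1/2, 1} as a subset of ℚ. -/
def Four : Set ℚ := {0, 1/4, 1/2, 1}

/-- Parallel conjunction ⊙₄. -/
def odot (A B : ℚ) : ℚ := if A ≠ 0 ∧ B ≠ 0 then 1 else 0

/-- Sequential conjunction ▷₄. -/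
def seqc (A B : ℚ) : ℚ :=
  if (A = 1/2 ∨ A = 1) ∧ B ≠ 0 then 1
  else if A = 1/4 ∧ B ≠ 0 then 1/4
  else 0

/-- Choice ⊔₄. -/
def choice (A B : ℚ) : ℚ := max A B

/-- Tensor product ⊗₄. -/
def tens (A B : ℚ) : ℚ := if A ≠ 0 ∧ B ≠ 0 then max A B else 0

/-- The unit I₄. -/
def I4 : ℚ := 1/4

/-- Linear implication ⊸₄. -/
def limp (A B : ℚ) : ℚ :=
  if B < A then 0
  else if A = B ∧ (A = 1/4 ∨ A = 1/2) then A
  else 1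

theorem seqc_assoc : ∀ A B C : ℚ, A ∈ Four → B ∈ Four → C ∈ Four →
    seqc (seqc A B) C = seqc A (seqc B C) := by
  intro A B C hA hB hC
  simp only [Four, Set.mem_insert_iff, Set.mem_singleton_iff] at hA hB hC
  rcases hA with h|h|h|h <;> subst h <;>
    rcases hB with h|h|h|h <;> subst h <;>
      rcases hC with h|h|h|h <;> subst h <;> norm_num [seqc]
end

section
/- Sequential conjunction of dialectica spaces is functorial: given morphisms (f,F) : A → C and (g,G) : B → D of dialectica spaces over 𝟜, the pair (f × g, F × G) is a morphism A ▷ B → C ▷ D. -/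
/-- Elements of 𝟜. -/
def F4 : Type := {q : ℚ // q ∈ Four}

instance : LE F4 := ⟨fun a b => a.1 ≤ b.1⟩

/-- A dialectica space over 𝟜 is a triple (U, X, α) with α : U → X → 𝟜. -/
structure DSpace where
  U : Type
  X : Type
  rel : U → X → F4

/-- The morphism condition for dialectica spaces:
(f, F) : A → B requires α(u, F y) ≤ β(f u, y) for all u, y. -/
def IsMorphism (A B : DSpace) (f : A.U → B.U) (F : B.X → A.X) : Prop :=
  ∀ (u : A.U) (y : B.X), A.rel u (F y) ≤ B.rel (f u) y

lemma seqc_mem (A B : ℚ) : seqc A B ∈ Four := by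
  unfold seqc Four
  split_ifs <;> simp

/-- Sequential conjunction on 𝟜. -/
def seqF (a b : F4) : F4 := ⟨seqc a.1 b.1, seqc_mem _ _⟩

/-- Sequential conjunction of dialectica spaces. -/
def dseq (A B : DSpace) : DSpace :=
  ⟨A.U × B.U, A.X × B.X, fun p q => seqF (A.rel p.1 q.1) (B.rel p.2 q.2)⟩

/-! For `b ≠ 0`, `a ▷₄ b` is a monotone function of `a` alone, and `a ▷₄ 0 = 0`; since every
element of 𝟜 is nonnegative, `▷₄` is monotone in both arguments, which is all functoriality needs. -/

lemma seqc_nonneg (a b : ℚ) : 0 ≤ seqc a b := by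
  unfold seqc
  split_ifs <;> norm_num

lemma nonneg_of_mem_four {a : ℚ} (ha : a ∈ Four) : 0 ≤ a := by
  simp only [Four, Set.mem_insert_iff, Set.mem_singleton_iff] at ha
  rcases ha with rfl | rfl | rfl | rfl <;> norm_num

lemma seqc_zero_right (a : ℚ) : seqc a 0 = 0 := by
  simp only [seqc, ne_eq, not_true_eq_false, and_false, ite_false]

lemma seqc_congr_right (a : ℚ) {b b' : ℚ} (hb : b ≠ 0) (hb' : b' ≠ 0) :
    seqc a b = seqc a b' := by
  simp [seqc, hb, hb']

lemma seqc_mono_right (a : ℚ) {b b' : ℚ} (hb : 0 ≤ b) (h : b ≤ b') :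
    seqc a b ≤ seqc a b' := by
  rcases hb.eq_or_lt with rfl | hpos
  · rw [seqc_zero_right]
    exact seqc_nonneg a b'
  · exact (seqc_congr_right a hpos.ne' (hpos.trans_le h).ne').le

lemma seqc_mono_left {a a' : ℚ} (ha : a ∈ Four) (ha' : a' ∈ Four) (h : a ≤ a') (b : ℚ) :
    seqc a b ≤ seqc a' b := by
  by_cases hb : b = 0
  · simp only [hb, seqc_zero_right, le_refl]
  simp only [Four, Set.mem_insert_iff, Set.mem_singleton_iff] at ha ha'
  revert h
  rcases ha with rfl | rfl | rfl | rfl <;> rcases ha' with rfl | rfl | rfl | rfl <;>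
    norm_num [seqc, hb]

lemma seqF_mono {a a' b b' : F4} (ha : a ≤ a') (hb : b ≤ b') : seqF a b ≤ seqF a' b' :=
  calc seqc a.1 b.1 ≤ seqc a'.1 b.1 := seqc_mono_left a.2 a'.2 ha b.1
    _ ≤ seqc a'.1 b'.1 := seqc_mono_right a'.1 (nonneg_of_mem_four b.2) hb

theorem dseq_functorial (A B C D : DSpace)
    (f : A.U → C.U) (F : C.X → A.X) (g : B.U → D.U) (G : D.X → B.X)
    (hf : IsMorphism A C f F) (hg : IsMorphism B D g G) :
    IsMorphism (dseq A B) (dseq C D) (Prod.map f g) (Prod.map F G) := by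
  rintro ⟨u, v⟩ ⟨y, z⟩
  exact seqF_mono (hf u y) (hg v z)
end

section
/- Sequential conjunction of dialectica spaces distributes over choice: for dialectica spaces A, B, C over 𝟜, there is an isomorphism of dialectica spaces A ▷ (B ⊔ C) ≅ (A ▷ B) ⊔ (A ▷ C), i.e., morphisms in both directions composing to identities. -/
lemma zero_mem : (0 : ℚ) ∈ Four := by simp [Four]

/-- Choice of dialectica spaces. -/
def dchoice (A B : DSpace) : DSpace :=
  ⟨A.U ⊕ B.U, A.X ⊕ B.X, fun a b =>
    match a, b with
    | .inl u, .inl x => A.rel u x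
    | .inr v, .inr y => B.rel v y
    | _, _ => ⟨0, zero_mem⟩⟩

lemma seqF_zero (a : F4) : seqF a ⟨0, zero_mem⟩ = ⟨0, zero_mem⟩ :=
  Subtype.ext (by simp [seqF, seqc])

lemma F4.le_of_eq {a b : F4} (h : a = b) : a ≤ b := by
  subst h
  exact le_refl a.1

lemma isMorphism_equiv_of_rel_eq {A B : DSpace} (e : A.U ≃ B.U) (E : A.X ≃ B.X)
    (h : ∀ u x, B.rel (e u) (E x) = A.rel u x) :
    IsMorphism A B e E.symm ∧ IsMorphism B A e.symm E := by
  constructor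
  · intro u y
    refine F4.le_of_eq ?_
    rw [← h, E.apply_symm_apply]
  · intro v x
    refine F4.le_of_eq ?_
    rw [← h, e.apply_symm_apply]

lemma dchoice_dseq_rel_prodSumDistrib (A B C : DSpace)
    (p : (dseq A (dchoice B C)).U) (q : (dseq A (dchoice B C)).X) :
    (dchoice (dseq A B) (dseq A C)).rel (Equiv.prodSumDistrib _ _ _ p)
      (Equiv.prodSumDistrib _ _ _ q) = (dseq A (dchoice B C)).rel p q := by
  rcases p with ⟨u, v | w⟩ <;> rcases q with ⟨x, y | z⟩
  all_goals first | rfl | exact (seqF_zero _).symm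

theorem dseq_distrib_dchoice (A B C : DSpace) :
    ∃ (f : (dseq A (dchoice B C)).U → (dchoice (dseq A B) (dseq A C)).U)
      (F : (dchoice (dseq A B) (dseq A C)).X → (dseq A (dchoice B C)).X)
      (g : (dchoice (dseq A B) (dseq A C)).U → (dseq A (dchoice B C)).U)
      (G : (dseq A (dchoice B C)).X → (dchoice (dseq A B) (dseq A C)).X),
      IsMorphism (dseq A (dchoice B C)) (dchoice (dseq A B) (dseq A C)) f F ∧
      IsMorphism (dchoice (dseq A B) (dseq A C)) (dseq A (dchoice B C)) g G ∧
      g ∘ f = id ∧ f ∘ g = id ∧ F ∘ G = id ∧ G ∘ F = id := by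
  let e := Equiv.prodSumDistrib A.U B.U C.U
  let E := Equiv.prodSumDistrib A.X B.X C.X
  obtain ⟨hf, hg⟩ := isMorphism_equiv_of_rel_eq (A := dseq A (dchoice B C))
    (B := dchoice (dseq A B) (dseq A C)) e E (dchoice_dseq_rel_prodSumDistrib A B C)
  exact ⟨e, E.symm, e.symm, E, hf, hg, e.symm_comp_self, e.self_comp_symm,
    E.symm_comp_self, E.self_comp_symm⟩
end

section
/- For any attack trees T₁ and T₂ over a set of base attacks 𝔹 with assignment ν : 𝔹 → 𝟜, T₁ ≈ T₂ (equivalence generated by associativity of OR/AND/SAND, commutativity of OR and AND, and distributivity of AND and SAND over OR) implies ⟦T₁⟧ = ⟦T₂⟧, where ⟦·⟧ interprets AND as ⊙₄, SAND as ▷₄, OR as ⊔₄, and base attacks via ν. -/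
/-- Attack trees over a set of base attacks. -/
inductive ATree (β : Type) : Type
  | base : β → ATree β
  | or : ATree β → ATree β → ATree β
  | and : ATree β → ATree β → ATree β
  | sand : ATree β → ATree β → ATree β

/-- Equivalence of attack trees: the congruence generated by associativity of
OR/AND/SAND, commutativity of OR and AND, and distributivity of AND and SAND
over OR. -/
inductive AEquiv {β : Type} : ATree β → ATree β → Prop
  | refl (A : ATree β) : AEquiv A A
  | symm {A B : ATree β} : AEquiv A B → AEquiv B A
  | trans {A B C : ATree β} : AEquiv A B → AEquiv B C → AEquiv A C
  | or_congr {A A' B B' : ATree β} : AEquiv A A' → AEquiv B B' →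
      AEquiv (.or A B) (.or A' B')
  | and_congr {A A' B B' : ATree β} : AEquiv A A' → AEquiv B B' →
      AEquiv (.and A B) (.and A' B')
  | sand_congr {A A' B B' : ATree β} : AEquiv A A' → AEquiv B B' →
      AEquiv (.sand A B) (.sand A' B')
  | or_assoc (A B C : ATree β) : AEquiv (.or (.or A B) C) (.or A (.or B C))
  | and_assoc (A B C : ATree β) : AEquiv (.and (.and A B) C) (.and A (.and B C))
  | sand_assoc (A B C : ATree β) : AEquiv (.sand (.sand A B) C) (.sand A (.sand B C))
  | or_comm (A B : ATree β) : AEquiv (.or A B) (.or B A)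
  | and_comm (A B : ATree β) : AEquiv (.and A B) (.and B A)
  | and_distrib (A B C : ATree β) :
      AEquiv (.and A (.or B C)) (.or (.and A B) (.and A C))
  | sand_distrib (A B C : ATree β) :
      AEquiv (.sand A (.or B C)) (.or (.sand A B) (.sand A C))

/-- Interpretation of attack trees into 𝟜. -/
def interp {β : Type} (ν : β → ℚ) : ATree β → ℚ
  | .base b => ν b
  | .or A B => choice (interp ν A) (interp ν B)
  | .and A B => odot (interp ν A) (interp ν B)
  | .sand A B => seqc (interp ν A) (interp ν B)

lemma odot_mem (A B : ℚ) : odot A B ∈ Four := by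
  unfold odot Four; split <;> simp

lemma choice_mem {A B : ℚ} (hA : A ∈ Four) (hB : B ∈ Four) : choice A B ∈ Four := by
  unfold choice
  rcases le_total A B with h | h
  · rw [max_eq_right h]; exact hB
  · rw [max_eq_left h]; exact hA

lemma interp_mem {β : Type} (ν : β → ℚ) (hν : ∀ b, ν b ∈ Four) :
    ∀ T : ATree β, interp ν T ∈ Four := by
  intro T
  induction T with
  | base b => exact hν b
  | or A B ihA ihB => exact choice_mem ihA ihB
  | and A B _ _ => exact odot_mem _ _
  | sand A B _ _ => exact seqc_mem _ _

lemma four_cases {a : ℚ} (h : a ∈ Four) : a = 0 ∨ a = 1/4 ∨ a = 1/2 ∨ a = 1 := h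

lemma odot_assoc {a b c : ℚ} (ha : a ∈ Four) (hb : b ∈ Four) (hc : c ∈ Four) :
    odot (odot a b) c = odot a (odot b c) := by
  rcases ha with rfl|rfl|rfl|rfl <;> rcases hb with rfl|rfl|rfl|rfl <;>
  rcases hc with rfl|rfl|rfl|rfl <;> norm_num [odot]

lemma seqc_assoc_s19 {a b c : ℚ} (ha : a ∈ Four) (hb : b ∈ Four) (hc : c ∈ Four) :
    seqc (seqc a b) c = seqc a (seqc b c) := by
  rcases ha with rfl|rfl|rfl|rfl <;> rcases hb with rfl|rfl|rfl|rfl <;>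
  rcases hc with rfl|rfl|rfl|rfl <;> norm_num [seqc]

lemma odot_comm (a b : ℚ) : odot a b = odot b a := by
  simp only [odot, and_comm]

lemma odot_distrib {a b c : ℚ} (ha : a ∈ Four) (hb : b ∈ Four) (hc : c ∈ Four) :
    odot a (choice b c) = choice (odot a b) (odot a c) := by
  rcases ha with rfl|rfl|rfl|rfl <;> rcases hb with rfl|rfl|rfl|rfl <;>
  rcases hc with rfl|rfl|rfl|rfl <;> norm_num [odot, choice]

lemma seqc_distrib {a b c : ℚ} (ha : a ∈ Four) (hb : b ∈ Four) (hc : c ∈ Four) :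
    seqc a (choice b c) = choice (seqc a b) (seqc a c) := by
  rcases ha with rfl|rfl|rfl|rfl <;> rcases hb with rfl|rfl|rfl|rfl <;>
  rcases hc with rfl|rfl|rfl|rfl <;> norm_num [seqc, choice]

theorem interp_sound {β : Type} (ν : β → ℚ) (hν : ∀ b, ν b ∈ Four) :
    ∀ T₁ T₂ : ATree β, AEquiv T₁ T₂ → interp ν T₁ = interp ν T₂ := by
  intro T₁ T₂ h
  induction h with
  | refl A => rfl
  | symm _ ih => exact ih.symm
  | trans _ _ ih1 ih2 => exact ih1.trans ih2
  | or_congr _ _ ih1 ih2 => simp [interp, ih1, ih2]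
  | and_congr _ _ ih1 ih2 => simp [interp, ih1, ih2]
  | sand_congr _ _ ih1 ih2 => simp [interp, ih1, ih2]
  | or_assoc A B C => simp [interp, choice, max_assoc]
  | and_assoc A B C => exact odot_assoc (interp_mem ν hν A) (interp_mem ν hν B) (interp_mem ν hν C)
  | sand_assoc A B C => exact seqc_assoc_s19 (interp_mem ν hν A) (interp_mem ν hν B) (interp_mem ν hν C)
  | or_comm A B => simp [interp, choice, max_comm]
  | and_comm A B => exact odot_comm _ _
  | and_distrib A B C => exact odot_distrib (interp_mem ν hν A) (interp_mem ν hν B) (interp_mem ν hν C)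
  | sand_distrib A B C => exact seqc_distrib (interp_mem ν hν A) (interp_mem ν hν B) (interp_mem ν hν C)
end
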